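/- arXiv:1810.03386 — 8 statements merged into one kernel-verified Lean document; each statement's English description precedes it below -/
import Mathlib

section
/- The union of two garbage sets is a garbage set: let q be a self-join-free Boolean conjunctive query, q_0 ⊆ q, and db a database. If o_1 and o_2 are both garbage sets for q_0 in db, then o_1 ∪ o_2 is a garbage set for q_0 in db. -/
/-- An atom of a self-join-free conjunctive query: a relation name together with a
list of terms (variables or constants) in the primary-key positions and in the
remaining positions. -/
structure CAtom (R V D : Type) where
  rel : R
  keyArgs : List (V ⊕ D)
  restArgs : List (V ⊕ D)

/-- A fact: a relation name together with the values in the primary-key positions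
and in the remaining positions. -/
structure CFact (R D : Type) where
  rel : R
  keyVals : List D
  restVals : List D

/-- Applying a valuation `θ` to an atom yields a fact. -/
def applyVal {R V D : Type} (θ : V → D) (F : CAtom R V D) : CFact R D :=
  ⟨F.rel, F.keyArgs.map (Sum.elim θ id), F.restArgs.map (Sum.elim θ id)⟩

/-- `θ(q)`: the image of a query under a valuation. -/
def applyQ {R V D : Type} (θ : V → D) (q : Set (CAtom R V D)) : Set (CFact R D) :=
  (applyVal θ) '' q

/-- Two facts are key-equal if they have the same relation name and the same
primary-key value. -/
def keyEq {R D : Type} (A B : CFact R D) : Prop :=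
  A.rel = B.rel ∧ A.keyVals = B.keyVals

/-- A set of facts is consistent if it contains no two distinct key-equal facts. -/
def Consistent {R D : Type} (s : Set (CFact R D)) : Prop :=
  ∀ A ∈ s, ∀ B ∈ s, keyEq A B → A = B

/-- `r` is a repair of `s`: a maximal (with respect to inclusion) consistent subset of `s`. -/
def IsRepair {R D : Type} (r s : Set (CFact R D)) : Prop :=
  r ⊆ s ∧ Consistent r ∧ ∀ r', r ⊆ r' → r' ⊆ s → Consistent r' → r' = r

/-- The block of a fact `A` in `db`: all facts of `db` key-equal to `A`. -/
def block {R D : Type} (A : CFact R D) (db : Set (CFact R D)) : Set (CFact R D) :=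
  {B ∈ db | keyEq A B}

/-- A query is self-join-free if no relation name occurs in two distinct atoms. -/
def SelfJoinFree {R V D : Type} (q : Set (CAtom R V D)) : Prop :=
  ∀ F ∈ q, ∀ G ∈ q, F.rel = G.rel → F = G

/-- `o` is a garbage set for the subquery `q0 ⊆ q` in `db`:
(1) every fact of `o` has its relation name among those of `q0` and its whole block
in `db` contained in `o`; and (2) there is a repair `r` of `o` such that every
valuation `θ` with `θ(q) ⊆ (db \ o) ∪ r` satisfies `θ(q0) ∩ r = ∅`. -/
def IsGarbage {R V D : Type} (q q0 : Set (CAtom R V D))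
    (db o : Set (CFact R D)) : Prop :=
  o ⊆ db ∧
  (∀ A ∈ o, (∃ F ∈ q0, F.rel = A.rel) ∧ block A db ⊆ o) ∧
  ∃ r, IsRepair r o ∧
    ∀ θ : V → D, applyQ θ q ⊆ (db \ o) ∪ r → applyQ θ q0 ∩ r = ∅

/-- A set of facts satisfies the Boolean conjunctive query `q`. -/
def Satisfies {R V D : Type} (s : Set (CFact R D)) (q : Set (CAtom R V D)) : Prop :=
  ∃ θ : V → D, applyQ θ q ⊆ s

lemma keyEq_symm {R D : Type} {A B : CFact R D} (h : keyEq A B) : keyEq B A :=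
  ⟨h.1.symm, h.2.symm⟩

lemma keyEq_trans {R D : Type} {A B C : CFact R D} (h : keyEq A B) (h' : keyEq B C) :
    keyEq A C := ⟨h.1.trans h'.1, h.2.trans h'.2⟩

/-- The union of two garbage sets is a garbage set. -/
theorem garbage_union {R V D : Type} (q q0 : Set (CAtom R V D))
    (hsjf : SelfJoinFree q) (hsub : q0 ⊆ q)
    (db : Set (CFact R D)) (hfin : db.Finite)
    (o1 o2 : Set (CFact R D))
    (h1 : IsGarbage q q0 db o1) (h2 : IsGarbage q q0 db o2) :
    IsGarbage q q0 db (o1 ∪ o2) := by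
  obtain ⟨ho1db, hblk1, r1, ⟨hr1sub, hr1con, hr1max⟩, hp1⟩ := h1
  obtain ⟨ho2db, hblk2, r2, ⟨hr2sub, hr2con, hr2max⟩, hp2⟩ := h2
  -- facts of o1 have their whole db-block in o1, similarly for o2
  have hin1 : ∀ {A B : CFact R D}, A ∈ o1 → B ∈ db → keyEq A B → B ∈ o1 := by
    intro A B hA hB hk
    exact (hblk1 A hA).2 ⟨hB, hk⟩
  have hin2 : ∀ {A B : CFact R D}, A ∈ o2 → B ∈ db → keyEq A B → B ∈ o2 := by
    intro A B hA hB hk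
    exact (hblk2 A hA).2 ⟨hB, hk⟩
  refine ⟨Set.union_subset ho1db ho2db, ?_, ?_⟩
  · rintro A (hA | hA)
    · exact ⟨(hblk1 A hA).1, fun B hB => Or.inl ((hblk1 A hA).2 hB)⟩
    · exact ⟨(hblk2 A hA).1, fun B hB => Or.inr ((hblk2 A hA).2 hB)⟩
  · refine ⟨r1 ∪ (r2 \ o1), ⟨?_, ?_, ?_⟩, ?_⟩
    · -- subset
      rintro A (hA | hA)
      · exact Or.inl (hr1sub hA)
      · exact Or.inr (hr2sub hA.1)
    · -- consistent
      rintro A (hA | hA) B (hB | hB) hk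
      · exact hr1con A hA B hB hk
      · exact absurd (hin1 (hr1sub hA) (ho2db (hr2sub hB.1)) hk) hB.2
      · exact absurd (hin1 (hr1sub hB) (ho2db (hr2sub hA.1)) (keyEq_symm hk)) hA.2
      · exact hr2con A hA.1 B hB.1 hk
    · -- maximal
      intro r' hrr' hr'sub hr'con
      refine Set.Subset.antisymm (fun B hB => ?_) hrr'
      rcases hr'sub hB with hBo | hBo
      · -- B lies in o1 : use maximality of r1
        have : r1 ∪ {B} = r1 := by
          refine hr1max _ (Set.subset_union_left) ?_ ?_
          · rintro C (hC | hC)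
            · exact hr1sub hC
            · rwa [Set.mem_singleton_iff.mp hC]
          · rintro C (hC | hC) E (hE | hE) hk
            · exact hr1con C hC E hE hk
            · rw [Set.mem_singleton_iff.mp hE] at *
              exact hr'con C (hrr' (Or.inl hC)) B hB hk
            · rw [Set.mem_singleton_iff.mp hC] at *
              exact hr'con B hB E (hrr' (Or.inl hE)) hk
            · rw [Set.mem_singleton_iff.mp hC, Set.mem_singleton_iff.mp hE]
        exact Or.inl (this ▸ Or.inr rfl)
      · by_cases hBo1 : B ∈ o1
        · -- as above
          have : r1 ∪ {B} = r1 := by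
            refine hr1max _ (Set.subset_union_left) ?_ ?_
            · rintro C (hC | hC)
              · exact hr1sub hC
              · rwa [Set.mem_singleton_iff.mp hC]
            · rintro C (hC | hC) E (hE | hE) hk
              · exact hr1con C hC E hE hk
              · rw [Set.mem_singleton_iff.mp hE] at *
                exact hr'con C (hrr' (Or.inl hC)) B hB hk
              · rw [Set.mem_singleton_iff.mp hC] at *
                exact hr'con B hB E (hrr' (Or.inl hE)) hk
              · rw [Set.mem_singleton_iff.mp hC, Set.mem_singleton_iff.mp hE]
          exact Or.inl (this ▸ Or.inr rfl)
        · -- B in o2 \ o1 : use maximality of r2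
          have : r2 ∪ {B} = r2 := by
            refine hr2max _ (Set.subset_union_left) ?_ ?_
            · rintro C (hC | hC)
              · exact hr2sub hC
              · rwa [Set.mem_singleton_iff.mp hC]
            · have key : ∀ C ∈ r2, keyEq C B → C = B := by
                intro C hC hk
                have hC1 : C ∉ o1 := by
                  intro hC1
                  exact hBo1 (hin1 hC1 (ho2db hBo) hk)
                exact hr'con C (hrr' (Or.inr ⟨hC, hC1⟩)) B hB hk
              rintro C (hC | hC) E (hE | hE) hk
              · exact hr2con C hC E hE hk
              · rw [Set.mem_singleton_iff.mp hE] at *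
                exact key C hC hk
              · rw [Set.mem_singleton_iff.mp hC] at *
                exact (key E hE (keyEq_symm hk)).symm
              · rw [Set.mem_singleton_iff.mp hC, Set.mem_singleton_iff.mp hE]
          exact Or.inr ⟨this ▸ Or.inr rfl, hBo1⟩
    · -- the garbage property
      intro θ hθ
      -- Step A : θ(q) ⊆ (db \ o1) ∪ r1
      have hA : applyQ θ q ⊆ (db \ o1) ∪ r1 := by
        intro B hB
        rcases hθ hB with h | (h | h)
        · exact Or.inl ⟨h.1, fun hc => h.2 (Or.inl hc)⟩
        · exact Or.inr h
        · exact Or.inl ⟨ho2db (hr2sub h.1), h.2⟩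
      have hq01 : applyQ θ q0 ∩ r1 = ∅ := hp1 θ hA
      -- Step B : every fact of θ(q) lying in o2 is in θ(q0)
      have hB : ∀ X ∈ applyQ θ q, X ∈ o2 → X ∈ applyQ θ q0 := by
        rintro X ⟨G, hG, rfl⟩ hX
        obtain ⟨F, hF, hFrel⟩ := (hblk2 _ hX).1
        have : (applyVal θ G).rel = G.rel := rfl
        have hFG : F = G := hsjf F (hsub hF) G hG (hFrel.trans this)
        exact ⟨F, hF, by rw [hFG]⟩
      -- Step C : θ(q) ⊆ (db \ o2) ∪ r2
      have hC : applyQ θ q ⊆ (db \ o2) ∪ r2 := by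
        intro X hX
        rcases hθ hX with h | (h | h)
        · exact Or.inl ⟨h.1, fun hc => h.2 (Or.inr hc)⟩
        · by_cases hX2 : X ∈ o2
          · exact absurd (Set.mem_inter (hB X hX hX2) h) (by rw [hq01]; exact id)
          · exact Or.inl ⟨ho1db (hr1sub h), hX2⟩
        · exact Or.inr h.1
      have hq02 : applyQ θ q0 ∩ r2 = ∅ := hp2 θ hC
      -- conclude
      ext X
      simp only [Set.mem_inter_iff, Set.mem_empty_iff_false, iff_false, not_and]
      rintro hX (hr | hr)
      · exact absurd (Set.mem_inter hX hr) (by rw [hq01]; exact id)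
      · exact absurd (Set.mem_inter hX hr.1) (by rw [hq02]; exact id)
end

section
/- Removing a garbage set preserves the answer to consistent query answering: let q be a self-join-free Boolean conjunctive query, q_0 ⊆ q, db a database, and o a garbage set for q_0 in db. Then every repair of db satisfies q if and only if every repair of db \ o satisfies q. -/
/-- Removing a garbage set preserves the answer to consistent query answering:
every repair of `db` satisfies `q` iff every repair of `db \ o` satisfies `q`. -/
theorem garbage_removal_preserves_cqa {R V D : Type} (q q0 : Set (CAtom R V D))
    (hsjf : SelfJoinFree q) (hsub : q0 ⊆ q)
    (db : Set (CFact R D)) (hfin : db.Finite)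
    (o : Set (CFact R D)) (ho : IsGarbage q q0 db o) :
    (∀ r, IsRepair r db → Satisfies r q) ↔
      (∀ r, IsRepair r (db \ o) → Satisfies r q) := by
  obtain ⟨hodb, hblk, rg, ⟨hrgo, hrgc, hrgmax⟩, hrg⟩ := ho
  constructor
  · -- forward direction
    intro h s hs
    obtain ⟨hssub, hsc, hsmax⟩ := hs
    have hcross : ∀ A ∈ rg, ∀ B ∈ s, ¬ keyEq A B := by
      intro A hA B hB hk
      exact (hssub hB).2 ((hblk A (hrgo hA)).2 ⟨(hssub hB).1, hk⟩)
    have hcons : Consistent (s ∪ rg) := by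
      intro A hA B hB hk
      rcases hA with hA | hA <;> rcases hB with hB | hB
      · exact hsc A hA B hB hk
      · exact absurd (⟨hk.1.symm, hk.2.symm⟩ : keyEq B A) (hcross B hB A hA)
      · exact absurd hk (hcross A hA B hB)
      · exact hrgc A hA B hB hk
    have hrep : IsRepair (s ∪ rg) db := by
      refine ⟨?_, hcons, ?_⟩
      · intro A hA
        rcases hA with hA | hA
        · exact (hssub hA).1
        · exact hodb (hrgo hA)
      · intro r' hsub' hr'db hr'c
        have h1 : r' ∩ (db \ o) = s := by
          apply hsmax
          · intro A hA; exact ⟨hsub' (Or.inl hA), hssub hA⟩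
          · exact Set.inter_subset_right
          · intro A hA B hB hk; exact hr'c A hA.1 B hB.1 hk
        have h2 : r' ∩ o = rg := by
          apply hrgmax
          · intro A hA; exact ⟨hsub' (Or.inr hA), hrgo hA⟩
          · exact Set.inter_subset_right
          · intro A hA B hB hk; exact hr'c A hA.1 B hB.1 hk
        ext A
        constructor
        · intro hA
          by_cases hAo : A ∈ o
          · exact Or.inr (h2 ▸ (⟨hA, hAo⟩ : A ∈ r' ∩ o))
          · exact Or.inl (h1 ▸ (⟨hA, hr'db hA, hAo⟩ : A ∈ r' ∩ (db \ o)))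
        · exact fun hA => hsub' hA
    obtain ⟨θ, hθ⟩ := h (s ∪ rg) hrep
    have hθ' : applyQ θ q ⊆ (db \ o) ∪ rg := by
      intro A hA
      rcases hθ hA with hh | hh
      · exact Or.inl (hssub hh)
      · exact Or.inr hh
    have hg := hrg θ hθ'
    refine ⟨θ, ?_⟩
    intro A hA
    rcases hθ hA with hh | hh
    · exact hh
    · exfalso
      obtain ⟨F, hF, rfl⟩ := hA
      obtain ⟨⟨G, hG, hGrel⟩, -⟩ := hblk _ (hrgo hh)
      have hGF : G = F := hsjf G (hsub hG) F hF hGrel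
      have hmem : applyVal θ F ∈ applyQ θ q0 := ⟨F, hGF ▸ hG, rfl⟩
      exact Set.notMem_empty _ (hg ▸ (Set.mem_inter hmem hh))
  · -- reverse direction
    intro h r hr
    obtain ⟨hrdb, hrc, hrmax⟩ := hr
    have hrep : IsRepair (r \ o) (db \ o) := by
      refine ⟨fun A hA => ⟨hrdb hA.1, hA.2⟩, fun A hA B hB hk => hrc A hA.1 B hB.1 hk, ?_⟩
      intro r' hsub' hr'sub hr'c
      have hkey : r' ∪ (r ∩ o) = r := by
        apply hrmax
        · intro A hA
          by_cases hAo : A ∈ o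
          · exact Or.inr ⟨hA, hAo⟩
          · exact Or.inl (hsub' ⟨hA, hAo⟩)
        · intro A hA
          rcases hA with hA | hA
          · exact (hr'sub hA).1
          · exact hrdb hA.1
        · intro A hA B hB hk
          rcases hA with hA | hA <;> rcases hB with hB | hB
          · exact hr'c A hA B hB hk
          · exact absurd ((hblk B hB.2).2 ⟨(hr'sub hA).1, hk.1.symm, hk.2.symm⟩)
              (hr'sub hA).2
          · exact absurd ((hblk A hA.2).2 ⟨(hr'sub hB).1, hk⟩) (hr'sub hB).2
          · exact hrc A hA.1 B hB.1 hk
      ext A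
      constructor
      · intro hA
        exact ⟨hkey ▸ (Or.inl hA : A ∈ r' ∪ (r ∩ o)), (hr'sub hA).2⟩
      · exact fun hA => hsub' hA
    obtain ⟨θ, hθ⟩ := h (r \ o) hrep
    exact ⟨θ, fun A hA => (hθ hA).1⟩
end

section
/- Garbage set removal of blocks: let q be a self-join-free Boolean conjunctive query, q_0 ⊆ q, db a database, and o a garbage set for q_0 in db. If p is a union of one or more blocks of o, then o \ p is a garbage set for q_0 in db \ p. -/
/-- If `o` is a garbage set for `q0` in `db` and `p` is a union of one or more
blocks of `o`, then `o \ p` is a garbage set for `q0` in `db \ p`. -/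
theorem garbage_minus_blocks {R V D : Type} (q q0 : Set (CAtom R V D))
    (hsjf : SelfJoinFree q) (hsub : q0 ⊆ q)
    (db : Set (CFact R D)) (hfin : db.Finite)
    (o : Set (CFact R D)) (ho : IsGarbage q q0 db o)
    (p : Set (CFact R D)) (hpne : p.Nonempty) (hpo : p ⊆ o)
    (hpb : ∀ A ∈ p, block A o ⊆ p) :
    IsGarbage q q0 (db \ p) (o \ p) := by
  obtain ⟨hodb, hblk, r, ⟨hr_sub, hr_con, hr_max⟩, hr_empty⟩ := ho
  refine ⟨fun A hA => ⟨hodb hA.1, hA.2⟩, ?_, r \ p, ⟨fun A hA => ⟨hr_sub hA.1, hA.2⟩,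
      fun A hA B hB hAB => hr_con A hA.1 B hB.1 hAB, ?_⟩, ?_⟩
  · intro A hA
    refine ⟨(hblk A hA.1).1, fun B hB => ⟨(hblk A hA.1).2 ⟨hB.1.1, hB.2⟩, hB.1.2⟩⟩
  · -- maximality
    intro r' hrr' hr'sub hr'con
    have hcon : Consistent (r' ∪ (r ∩ p)) := by
      intro A hA B hB hAB
      rcases hA with hA | hA
      · rcases hB with hB | hB
        · exact hr'con A hA B hB hAB
        · exact absurd (hpb B hB.2 ⟨(hr'sub hA).1, ⟨hAB.1.symm, hAB.2.symm⟩⟩) (hr'sub hA).2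
      · rcases hB with hB | hB
        · exact absurd (hpb A hA.2 ⟨(hr'sub hB).1, hAB⟩) (hr'sub hB).2
        · exact hr_con A hA.1 B hB.1 hAB
    have hkey : r' ∪ (r ∩ p) = r := by
      apply hr_max
      · intro A hA
        by_cases hAp : A ∈ p
        · exact Or.inr ⟨hA, hAp⟩
        · exact Or.inl (hrr' ⟨hA, hAp⟩)
      · intro A hA
        rcases hA with hA | hA
        · exact (hr'sub hA).1
        · exact hr_sub hA.1
      · exact hcon
    ext A
    constructor
    · intro hA
      have : A ∈ r := hkey ▸ Or.inl hA
      exact ⟨this, (hr'sub hA).2⟩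
    · exact fun hA => hrr' hA
  · -- the repair condition
    intro θ hθ
    have h1 : applyQ θ q ⊆ (db \ o) ∪ r := by
      intro A hA
      rcases hθ hA with ⟨hA1, hA2⟩ | hA1
      · exact Or.inl ⟨hA1.1, fun hAo => hA2 ⟨hAo, hA1.2⟩⟩
      · exact Or.inr hA1.1
    have h2 := hr_empty θ h1
    apply Set.eq_empty_of_subset_empty
    intro A hA
    rw [← h2]
    exact ⟨hA.1, hA.2.1⟩
end

section
/- Chaining of garbage sets: let q be a self-join-free Boolean conjunctive query, q_0 ⊆ q, and db a database. If o is a garbage set for q_0 in db, and p is a garbage set for q_0 in db \ o, then o ∪ p is a garbage set for q_0 in db. -/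
/-- Chaining of garbage sets: if `o` is a garbage set for `q0` in `db` and `p` is a
garbage set for `q0` in `db \ o`, then `o ∪ p` is a garbage set for `q0` in `db`. -/
theorem garbage_chain {R V D : Type} (q q0 : Set (CAtom R V D))
    (hsjf : SelfJoinFree q) (hsub : q0 ⊆ q)
    (db : Set (CFact R D)) (hfin : db.Finite)
    (o p : Set (CFact R D))
    (ho : IsGarbage q q0 db o) (hp : IsGarbage q q0 (db \ o) p) :
    IsGarbage q q0 db (o ∪ p) := by
  obtain ⟨hoSub, hoBlk, ro, ⟨hroSub, hroCons, hroMax⟩, hθO⟩ := ho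
  obtain ⟨hpSub, hpBlk, rp, ⟨hrpSub, hrpCons, hrpMax⟩, hθP⟩ := hp
  have hpdb : p ⊆ db := fun A hA => (hpSub hA).1
  have hpo : ∀ A ∈ p, A ∉ o := fun A hA => (hpSub hA).2
  refine ⟨Set.union_subset hoSub hpdb, ?_, ro ∪ rp, ⟨?_, ?_, ?_⟩, ?_⟩
  · rintro A (hA | hA)
    · exact ⟨(hoBlk A hA).1, (hoBlk A hA).2.trans (Set.subset_union_left)⟩
    · refine ⟨(hpBlk A hA).1, fun B hB => ?_⟩
      by_cases hBo : B ∈ o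
      · exact Or.inl hBo
      · exact Or.inr ((hpBlk A hA).2 ⟨⟨hB.1, hBo⟩, hB.2⟩)
  · exact Set.union_subset (hroSub.trans Set.subset_union_left)
      (hrpSub.trans Set.subset_union_right)
  · -- consistency of ro ∪ rp
    rintro A (hA | hA) B (hB | hB) hkeq
    · exact hroCons A hA B hB hkeq
    · -- A ∈ ro ⊆ o, B ∈ rp ⊆ p ⊆ db \ o : B ∈ block A db ⊆ o, contradiction
      exact absurd ((hoBlk A (hroSub hA)).2 ⟨(hpSub (hrpSub hB)).1, hkeq⟩)
        (hpSub (hrpSub hB)).2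
    · exact absurd ((hoBlk B (hroSub hB)).2 ⟨(hpSub (hrpSub hA)).1,
        ⟨hkeq.1.symm, hkeq.2.symm⟩⟩) (hpSub (hrpSub hA)).2
    · exact hrpCons A hA B hB hkeq
  · -- maximality
    intro r' hsub' hsub'' hcons
    have h1 : r' ∩ o = ro := by
      apply hroMax
      · exact Set.subset_inter (Set.subset_union_left.trans hsub') hroSub
      · exact Set.inter_subset_right
      · exact fun A hA B hB hk => hcons A hA.1 B hB.1 hk
    have h2 : r' ∩ p = rp := by
      apply hrpMax
      · exact Set.subset_inter (Set.subset_union_right.trans hsub') hrpSub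
      · exact Set.inter_subset_right
      · exact fun A hA B hB hk => hcons A hA.1 B hB.1 hk
    have : r' = (r' ∩ o) ∪ (r' ∩ p) := by
      ext A
      constructor
      · intro hA
        rcases hsub'' hA with h | h
        · exact Or.inl ⟨hA, h⟩
        · exact Or.inr ⟨hA, h⟩
      · rintro (h | h) <;> exact h.1
    rw [this, h1, h2]
  · -- the valuation condition
    intro θ hθ
    have hO : applyQ θ q ⊆ (db \ o) ∪ ro := by
      intro A hA
      rcases hθ hA with h | h | h
      · exact Or.inl ⟨h.1, fun ho' => h.2 (Or.inl ho')⟩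
      · exact Or.inr h
      · exact Or.inl (hpSub (hrpSub h))
    have hq0o : applyQ θ q0 ∩ ro = ∅ := hθO θ hO
    -- θ(q) ∩ ro = ∅ using self-join-freeness
    have hqro : ∀ A ∈ applyQ θ q, A ∉ ro := by
      rintro A ⟨F, hF, rfl⟩ hA
      obtain ⟨G, hG, hGrel⟩ := (hoBlk _ (hroSub hA)).1
      have : G = F := hsjf G (hsub hG) F hF hGrel
      have : applyVal θ F ∈ applyQ θ q0 ∩ ro := ⟨⟨G, hG, by rw [this]⟩, hA⟩
      rw [hq0o] at this
      exact this
    have hP : applyQ θ q ⊆ ((db \ o) \ p) ∪ rp := by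
      intro A hA
      rcases hθ hA with h | h | h
      · exact Or.inl ⟨⟨h.1, fun ho' => h.2 (Or.inl ho')⟩, fun hp' => h.2 (Or.inr hp')⟩
      · exact absurd h (hqro A hA)
      · exact Or.inr h
    have hq0p : applyQ θ q0 ∩ rp = ∅ := hθP θ hP
    ext A
    simp only [Set.mem_inter_iff, Set.mem_union, Set.mem_empty_iff_false, iff_false, not_and,
      not_or]
    intro hA
    constructor
    · intro h; exact Set.eq_empty_iff_forall_notMem.mp hq0o A ⟨hA, h⟩
    · intro h; exact Set.eq_empty_iff_forall_notMem.mp hq0p A ⟨hA, h⟩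
end

section
/- Let q be a self-join-free Boolean conjunctive query and db a database. If A ↪ B and A ↪ B' are edges of the ↪-graph of db such that B and B' have the same relation name, then B and B' are key-equal. -/
/-- A set `Vs` of valuations satisfies the functional dependency `X → Y`. -/
def FDSat {V D : Type} (Vs : Set (V → D)) (X Y : Set V) : Prop :=
  ∀ θ ∈ Vs, ∀ μ ∈ Vs, (∀ x ∈ X, θ x = μ x) → ∀ y ∈ Y, θ y = μ y

/-- Logical implication of functional dependencies, with respect to finite sets of
valuations into the domain `D`. -/
def FDImplies {V : Type} (D : Type) (Sg : Set (Set V × Set V)) (X Y : Set V) : Prop :=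
  ∀ Vs : Set (V → D), Vs.Finite → (∀ σ ∈ Sg, FDSat Vs σ.1 σ.2) → FDSat Vs X Y

/-- The set of variables occurring in an atom. -/
def atomVars {R V D : Type} (F : CAtom R V D) : Set V :=
  {v | Sum.inl v ∈ F.keyArgs ∨ Sum.inl v ∈ F.restArgs}

/-- The set of variables occurring in the primary key of an atom. -/
def keyVars {R V D : Type} (F : CAtom R V D) : Set V :=
  {v | Sum.inl v ∈ F.keyArgs}

/-- `FD(s) = {key(F) → vars(F) : F ∈ s}`. -/
def FDsetOf {R V D : Type} (s : Set (CAtom R V D)) : Set (Set V × Set V) :=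
  (fun F => (keyVars F, atomVars F)) '' s

/-- The atoms of `q` of mode `c` (consistent relations). -/
def catomsQ {R V D : Type} (mode : R → Bool) (q : Set (CAtom R V D)) :
    Set (CAtom R V D) :=
  {F ∈ q | mode F.rel = true}

/-- Edge `F →_M G` of the M-graph of `q`: `F ≠ G` and
`FD(c-atoms(q)) ⊨ vars(F) → key(G)`. -/
def Medge {R V D : Type} (mode : R → Bool) (q : Set (CAtom R V D))
    (F G : CAtom R V D) : Prop :=
  F ∈ q ∧ G ∈ q ∧ F ≠ G ∧
    FDImplies D (FDsetOf (catomsQ mode q)) (atomVars F) (keyVars G)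

/-- A legal database: relations of mode `c` are consistent. -/
def LegalDb {R D : Type} (mode : R → Bool) (db : Set (CFact R D)) : Prop :=
  ∀ A ∈ db, ∀ B ∈ db, mode A.rel = true → keyEq A B → A = B

/-- Edge `A ↪ B` of the `↪`-graph of `db`: `A` and `B` are facts of `db` and there
are a valuation `θ` and an M-graph edge `F →_M G` with `θ(q) ⊆ db`, `A = θ(F)`,
and `B` key-equal to `θ(G)`. -/
def hookEdge {R V D : Type} (mode : R → Bool) (q : Set (CAtom R V D))
    (db : Set (CFact R D)) (A B : CFact R D) : Prop :=
  A ∈ db ∧ B ∈ db ∧ ∃ (θ : V → D) (F G : CAtom R V D),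
    Medge mode q F G ∧ applyQ θ q ⊆ db ∧ A = applyVal θ F ∧ keyEq B (applyVal θ G)

lemma map_elim_eq_iff {V D : Type} (θ μ : V → D) (l : List (V ⊕ D)) :
    l.map (Sum.elim θ id) = l.map (Sum.elim μ id) ↔
      ∀ v, Sum.inl v ∈ l → θ v = μ v := by
  rw [List.map_eq_map_iff]
  constructor
  · intro h v hv; exact h _ hv
  · intro h x hx
    cases x with
    | inl v => exact h v hx
    | inr d => rfl

/-- If `A ↪ B` and `A ↪ B'` are edges of the `↪`-graph of a legal database `db`
(for a self-join-free query `q`) such that `B` and `B'` have the same relation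
name, then `B` and `B'` are key-equal. -/
theorem hook_target_keyEq {R V D : Type} [Infinite D] (mode : R → Bool)
    (q : Set (CAtom R V D)) (hsjf : SelfJoinFree q)
    (db : Set (CFact R D)) (hfin : db.Finite) (hlegal : LegalDb mode db)
    (A B B' : CFact R D)
    (h1 : hookEdge mode q db A B) (h2 : hookEdge mode q db A B')
    (hrel : B.rel = B'.rel) :
    keyEq B B' := by
  obtain ⟨hA, hB, θ1, F1, G1, ⟨hF1q, hG1q, _, himp1⟩, hθ1, hAF1, hBG1⟩ := h1
  obtain ⟨_, hB', θ2, F2, G2, ⟨hF2q, hG2q, _, himp2⟩, hθ2, hAF2, hBG2⟩ := h2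
  -- F1 = F2
  have hFrel : F1.rel = F2.rel := by
    have : (applyVal θ1 F1).rel = (applyVal θ2 F2).rel := by rw [← hAF1, ← hAF2]
    simpa [applyVal] using this
  have hFF : F1 = F2 := hsjf F1 hF1q F2 hF2q hFrel
  subst hFF
  -- G1 = G2
  have hGrel : G1.rel = G2.rel := by
    have h1r : B.rel = G1.rel := by simpa [applyVal] using hBG1.1
    have h2r : B'.rel = G2.rel := by simpa [applyVal] using hBG2.1
    rw [← h1r, ← h2r, hrel]
  have hGG : G1 = G2 := hsjf G1 hG1q G2 hG2q hGrel
  subst hGG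
  -- θ1 and θ2 agree on vars of F1
  have hagreeF : ∀ v ∈ atomVars F1, θ1 v = θ2 v := by
    have hEq : applyVal θ1 F1 = applyVal θ2 F1 := by rw [← hAF1, hAF2]
    have hk := congrArg CFact.keyVals hEq
    have hr := congrArg CFact.restVals hEq
    simp only [applyVal] at hk hr
    rw [map_elim_eq_iff] at hk hr
    intro v hv
    rcases hv with hv | hv
    · exact hk v hv
    · exact hr v hv
  -- instantiate FD implication with Vs = {θ1, θ2}
  have hFDsat : ∀ σ ∈ FDsetOf (catomsQ mode q), FDSat ({θ1, θ2} : Set (V → D)) σ.1 σ.2 := by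
    rintro σ ⟨H, ⟨hHq, hHc⟩, rfl⟩
    intro θ hθ μ hμ hkey y hy
    have key : ∀ (α β : V → D), α ∈ ({θ1, θ2} : Set (V → D)) →
        β ∈ ({θ1, θ2} : Set (V → D)) → (∀ x ∈ keyVars H, α x = β x) →
        applyVal α H = applyVal β H := by
      intro α β hα hβ hk
      have hαdb : applyVal α H ∈ db := by
        rcases hα with rfl | rfl
        · exact hθ1 ⟨H, hHq, rfl⟩
        · exact hθ2 ⟨H, hHq, rfl⟩
      have hβdb : applyVal β H ∈ db := by
        rcases hβ with rfl | rfl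
        · exact hθ1 ⟨H, hHq, rfl⟩
        · exact hθ2 ⟨H, hHq, rfl⟩
      have hmode : mode (applyVal α H).rel = true := by simpa [applyVal] using hHc
      apply hlegal _ hαdb _ hβdb hmode
      refine ⟨rfl, ?_⟩
      simp only [applyVal]
      rw [map_elim_eq_iff]
      exact fun v hv => hk v hv
    have hEq : applyVal θ H = applyVal μ H := key θ μ hθ hμ hkey
    have hk := congrArg CFact.keyVals hEq
    have hr := congrArg CFact.restVals hEq
    simp only [applyVal] at hk hr
    rw [map_elim_eq_iff] at hk hr
    rcases hy with hy | hy
    · exact hk y hy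
    · exact hr y hy
  have hfinVs : ({θ1, θ2} : Set (V → D)).Finite := (Set.finite_singleton θ1).insert θ2 |>.subset
      (by intro x hx; rcases hx with rfl | rfl <;> simp)
  have hsat := himp1 ({θ1, θ2} : Set (V → D)) hfinVs hFDsat
  have hagreeG : ∀ v ∈ keyVars G1, θ1 v = θ2 v :=
    hsat θ1 (by simp) θ2 (by simp) hagreeF
  -- conclude
  have hkeyG : (applyVal θ1 G1).keyVals = (applyVal θ2 G1).keyVals := by
    simp only [applyVal]
    rw [map_elim_eq_iff]
    exact fun v hv => hagreeG v hv
  exact ⟨hrel, by rw [hBG1.2, hBG2.2, hkeyG]⟩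
end

section
/- Let q be a self-join-free Boolean conjunctive query with the key-join property. If F attacks G in the attack graph of q, then there exists a sequence F_0, F_1, ..., F_ℓ of atoms of q with F_0 = F, F_ℓ = G, and for all i ∈ {1,...,ℓ}, key(F_i) ⊆ vars(F_{i-1}). -/
/-- `FD(s) = {key(F) → vars(F) : F ∈ s}`, for a set `s` of atoms. -/
def FDsetA {A V : Type} (keyA varsA : A → Set V) (s : Set A) : Set (Set V × Set V) :=
  (fun F => (keyA F, varsA F)) '' s

/-- The atoms of `q` of mode `c` (consistent relations). -/
def catomsA {A : Type} (mode : A → Bool) (q : Set A) : Set A :=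
  {F ∈ q | mode F = true}

/-- The closure `key⁺(F,q)`: all variables `x` with
`FD(q \ {F}) ∪ FD(c-atoms(q)) ⊨ key(F) → x`. -/
def keyCl {A V : Type} (D : Type) (keyA varsA : A → Set V) (mode : A → Bool)
    (q : Set A) (F : A) : Set V :=
  {x | FDImplies D (FDsetA keyA varsA ((q \ {F}) ∪ catomsA mode q)) (keyA F) {x}}

/-- One step of a witness for an attack by the atom whose closure is `X`:
the next atom `H` is in `q` and shares with the current atom `G` a variable
outside `X`. -/
def attackStep {A V : Type} (varsA : A → Set V) (q : Set A) (X : Set V)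
    (G H : A) : Prop :=
  H ∈ q ∧ ∃ x, x ∈ varsA G ∧ x ∈ varsA H ∧ x ∉ X

/-- `F` attacks `G` in the attack graph of `q`: `F ≠ G`, both in `q`, and there is
a witness sequence from `F` to `G` each step of which shares a variable outside
`key⁺(F,q)`. -/
def attacks {A V : Type} (D : Type) (keyA varsA : A → Set V) (mode : A → Bool)
    (q : Set A) (F G : A) : Prop :=
  F ∈ q ∧ G ∈ q ∧ F ≠ G ∧
    Relation.ReflTransGen (attackStep varsA q (keyCl D keyA varsA mode q F)) F G

/-- The key-join property: any two atoms of `q` either share no variables, or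
their shared variables are exactly the key variables of one of them, or the
shared variables contain all key variables of both. -/
def KeyJoin {A V : Type} (keyA varsA : A → Set V) (q : Set A) : Prop :=
  ∀ F ∈ q, ∀ G ∈ q,
    varsA F ∩ varsA G = ∅ ∨ varsA F ∩ varsA G = keyA F ∨
    varsA F ∩ varsA G = keyA G ∨ keyA F ∪ keyA G ⊆ varsA F ∩ varsA G

/-!
Follow the witness of the attack and maintain a chain `F = E₀, …, E_k = E` of atoms of `q`
with `key(E_{i+1}) ⊆ vars(E_i)` that ends at the current witness atom `E`. The next witness
atom `H` shares with `E` a variable `x ∉ key⁺(F,q)`. If `x ∉ key(E)`, the key-join property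
forces `key(H) ⊆ vars(E)`, so `H` is appended to the chain. If `x ∈ key(E)`, then `E ≠ F`
(as `key(F) ⊆ key⁺(F,q)`) and `x ∈ key(E) ⊆ vars(E_{k-1})`, so `E` is dropped and `H` is
attached to the shorter chain instead.
-/

def KeyStep {A V : Type} (keyA varsA : A → Set V) (q : Set A) (G H : A) : Prop :=
  H ∈ q ∧ keyA H ⊆ varsA G

theorem subset_keyCl {A V : Type} (D : Type) (keyA varsA : A → Set V) (mode : A → Bool)
    (q : Set A) (F : A) : keyA F ⊆ keyCl D keyA varsA mode q F := by
  rintro x hx Vs - - θ - μ - hagree y rfl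
  exact hagree y hx

namespace KeyJoin

variable {A V : Type} {keyA varsA : A → Set V} {q : Set A}

theorem keyStep_of_mem_inter_of_notMem_key (hkj : KeyJoin keyA varsA q) {G H : A}
    (hG : G ∈ q) (hH : H ∈ q) {x : V} (hxG : x ∈ varsA G) (hxH : x ∈ varsA H)
    (hx : x ∉ keyA G) : KeyStep keyA varsA q G H := by
  have hxGH : x ∈ varsA G ∩ varsA H := ⟨hxG, hxH⟩
  refine ⟨hH, ?_⟩
  rcases hkj G hG H hH with hempty | hkeyG | hkeyH | hboth
  · simp [hempty] at hxGH
  · exact absurd (hkeyG ▸ hxGH) hx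
  · exact hkeyH ▸ Set.inter_subset_left
  · exact fun y hy => (hboth (Set.mem_union_right _ hy)).1

theorem reflTransGen_keyStep_of_attackStep (hkj : KeyJoin keyA varsA q) {X : Set V} {F E H : A}
    (hF : F ∈ q) (hFX : keyA F ⊆ X) (hFE : Relation.ReflTransGen (KeyStep keyA varsA q) F E)
    (hEH : attackStep varsA q X E H) : Relation.ReflTransGen (KeyStep keyA varsA q) F H := by
  induction hFE generalizing H with
  | refl =>
    obtain ⟨hH, x, hxF, hxH, hxX⟩ := hEH
    exact .single (hkj.keyStep_of_mem_inter_of_notMem_key hF hH hxF hxH (fun h => hxX (hFX h)))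
  | @tail P E hFP hPE ih =>
    obtain ⟨hH, x, hxE, hxH, hxX⟩ := hEH
    by_cases hxkey : x ∈ keyA E
    · exact ih ⟨hH, x, hPE.2 hxkey, hxH, hxX⟩
    · exact (hFP.tail hPE).tail (hkj.keyStep_of_mem_inter_of_notMem_key hPE.1 hH hxE hxH hxkey)

theorem reflTransGen_keyStep_of_reflTransGen_attackStep (hkj : KeyJoin keyA varsA q)
    {X : Set V} {F G : A} (hF : F ∈ q) (hFX : keyA F ⊆ X)
    (hFG : Relation.ReflTransGen (attackStep varsA q X) F G) :
    Relation.ReflTransGen (KeyStep keyA varsA q) F G := by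
  induction hFG with
  | refl => exact .refl
  | tail _ hEH ih => exact hkj.reflTransGen_keyStep_of_attackStep hF hFX ih hEH

end KeyJoin

theorem exists_list_of_reflTransGen_keyStep {A V : Type} {keyA varsA : A → Set V} {q : Set A}
    {F G : A} (hF : F ∈ q) (hFG : Relation.ReflTransGen (KeyStep keyA varsA q) F G) :
    ∃ L : List A, L ≠ [] ∧ L.head? = some F ∧ L.getLast? = some G ∧
      (∀ H ∈ L, H ∈ q) ∧
      ∀ i (h : i + 1 < L.length),
        keyA (L.get ⟨i + 1, h⟩) ⊆ varsA (L.get ⟨i, Nat.lt_of_succ_lt h⟩) := by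
  obtain ⟨l, hchain, hlast⟩ := List.exists_isChain_cons_of_relationReflTransGen hFG
  refine ⟨F :: l, List.cons_ne_nil _ _, rfl, ?_, ?_, ?_⟩
  · rw [List.getLast?_eq_some_getLast (List.cons_ne_nil _ _), hlast]
  · rintro H (_ | ⟨_, hH⟩)
    · exact hF
    · exact hchain.cons_induction (· ∈ q) l (fun _ _ hstep _ => hstep.1) hF H hH
  · intro i h
    exact (List.isChain_iff_getElem.mp hchain i h).2

theorem keyjoin_attack_chain_general {A V D : Type}
    (keyA varsA : A → Set V) (mode : A → Bool)
    (q : Set A)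
    (hkj : KeyJoin keyA varsA q) (F G : A)
    (hatt : attacks D keyA varsA mode q F G) :
    ∃ L : List A, L ≠ [] ∧ L.head? = some F ∧ L.getLast? = some G ∧
      (∀ H ∈ L, H ∈ q) ∧
      ∀ i (h : i + 1 < L.length),
        keyA (L.get ⟨i + 1, h⟩) ⊆ varsA (L.get ⟨i, Nat.lt_of_succ_lt h⟩) := by
  obtain ⟨hF, -, -, hwitness⟩ := hatt
  exact exists_list_of_reflTransGen_keyStep hF
    (hkj.reflTransGen_keyStep_of_reflTransGen_attackStep hF (subset_keyCl D keyA varsA mode q F)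
      hwitness)

/-- If a self-join-free Boolean conjunctive query `q` has the key-join property
and `F` attacks `G`, then there is a sequence `F₀ = F, F₁, …, F_ℓ = G` of atoms
of `q` with `key(F_i) ⊆ vars(F_{i-1})` for all `i ∈ {1,…,ℓ}`. -/
theorem keyjoin_attack_chain {A V D : Type} [Infinite D]
    (keyA varsA : A → Set V) (mode : A → Bool)
    (q : Set A) (hq : q.Finite) (hkey : ∀ F, keyA F ⊆ varsA F)
    (hkj : KeyJoin keyA varsA q) (F G : A)
    (hatt : attacks D keyA varsA mode q F G) :
    ∃ L : List A, L ≠ [] ∧ L.head? = some F ∧ L.getLast? = some G ∧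
      (∀ H ∈ L, H ∈ q) ∧
      ∀ i (h : i + 1 < L.length),
        keyA (L.get ⟨i + 1, h⟩) ⊆ varsA (L.get ⟨i, Nat.lt_of_succ_lt h⟩) :=
  keyjoin_attack_chain_general keyA varsA mode q hkj F G hatt
end

section
/- Every self-join-free Boolean conjunctive query with the key-join property has only weak attacks in its attack graph; in particular, its attack graph contains no strong cycle. -/
/-- Every self-join-free Boolean conjunctive query with the key-join property has
only weak attacks in its attack graph (`FD(q) ⊨ key(F) → key(G)` for every attack
`F` attacks `G`); in particular, its attack graph contains no strong cycle. -/
theorem keyjoin_all_attacks_weak {A V D : Type} [Infinite D]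
    (keyA varsA : A → Set V) (mode : A → Bool)
    (q : Set A) (hq : q.Finite) (hkey : ∀ F, keyA F ⊆ varsA F)
    (hkj : KeyJoin keyA varsA q) :
    (∀ F G, attacks D keyA varsA mode q F G →
        FDImplies D (FDsetA keyA varsA q) (keyA F) (keyA G)) ∧
      ¬ ∃ (n : ℕ) (f : ℕ → A), 0 < n ∧ f n = f 0 ∧
          (∀ i < n, attacks D keyA varsA mode q (f i) (f (i + 1))) ∧
          ∃ i < n, ¬ FDImplies D (FDsetA keyA varsA q) (keyA (f i)) (keyA (f (i + 1))) := by
  have main : ∀ F G, attacks D keyA varsA mode q F G →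
      FDImplies D (FDsetA keyA varsA q) (keyA F) (keyA G) := by
    intro F G hatt
    obtain ⟨hF, hG, hne, hpath⟩ := hatt
    -- the "sequential" chain relation: next atom's key is contained in current atom's vars
    let S : A → A → Prop := fun G H => H ∈ q ∧ keyA H ⊆ varsA G
    -- key F is trivially contained in the closure
    have hkeyCl : keyA F ⊆ keyCl D keyA varsA mode q F := by
      intro x hx
      intro Vs _ _ θ hθ μ hμ hag y hy
      rcases hy with rfl
      exact hag _ hx
    -- membership along chains
    have memS : ∀ {b}, Relation.ReflTransGen S F b → b ∈ q := by
      intro b h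
      induction h with
      | refl => exact hF
      | tail _ hbc _ => exact hbc.1
    -- Lemma A: extending a chain through a shared variable outside the closure
    have lemA : ∀ {b}, Relation.ReflTransGen S F b → ∀ x G', x ∈ varsA b →
        x ∈ varsA G' → x ∉ keyCl D keyA varsA mode q F → G' ∈ q →
        Relation.ReflTransGen S F G' := by
      intro b h
      induction h with
      | refl =>
        intro x G' hxF hxG' hxC hG'
        rcases hkj F hF G' hG' with h0 | h1 | h2 | h3
        · exact absurd (h0 ▸ Set.mem_inter hxF hxG') (Set.notMem_empty x)
        · exact absurd (hkeyCl (h1 ▸ Set.mem_inter hxF hxG')) hxC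
        · exact Relation.ReflTransGen.single
            ⟨hG', fun z hz => (h2 ▸ (Set.mem_inter_iff z _ _).mp) (h2 ▸ hz) |>.1⟩
        · exact Relation.ReflTransGen.single
            ⟨hG', fun z hz => (h3 (Set.mem_union_right _ hz)).1⟩
      | tail hab hbc ih =>
        rename_i b' c
        intro x G' hxc hxG' hxC hG'
        rcases hkj c hbc.1 G' hG' with h0 | h1 | h2 | h3
        · exact absurd (h0 ▸ Set.mem_inter hxc hxG') (Set.notMem_empty x)
        · -- x ∈ key c ⊆ vars b' : descend
          have hxb' : x ∈ varsA b' := hbc.2 (by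
            have := h1 ▸ Set.mem_inter hxc hxG'
            exact this)
          exact ih x G' hxb' hxG' hxC hG'
        · refine (hab.tail hbc).tail ⟨hG', fun z hz => ?_⟩
          have : z ∈ varsA c ∩ varsA G' := h2 ▸ hz
          exact this.1
        · exact (hab.tail hbc).tail ⟨hG', fun z hz => (h3 (Set.mem_union_right _ hz)).1⟩
    -- convert the attack witness path into a chain
    have hchain : Relation.ReflTransGen S F G := by
      clear hne hG
      induction hpath with
      | refl => exact Relation.ReflTransGen.refl
      | tail hab hbc ih =>
        obtain ⟨hHq, x, hxb, hxH, hxC⟩ := hbc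
        exact lemA ih x _ hxb hxH hxC hHq
    -- conclude the FD implication from the chain
    intro Vs hfin hsat θ hθ μ hμ hag
    have agree : ∀ {b}, Relation.ReflTransGen S F b → ∀ z ∈ varsA b, θ z = μ z := by
      intro b h
      induction h with
      | refl =>
        exact hsat (keyA F, varsA F) ⟨F, hF, rfl⟩ θ hθ μ hμ hag
      | tail hab hbc ih =>
        have hkagree : ∀ z ∈ keyA _, θ z = μ z := fun z hz => ih z (hbc.2 hz)
        exact hsat (keyA _, varsA _) ⟨_, hbc.1, rfl⟩ θ hθ μ hμ hkagree
    exact fun y hy => agree hchain y (hkey G hy)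
  refine ⟨main, ?_⟩
  rintro ⟨n, f, hn, hfn, hall, i, hi, hbad⟩
  exact hbad (main _ _ (hall i hi))
end

section
/- Let q be a self-join-free Boolean conjunctive query that is saturated and whose attack graph contains no strong cycle. Let S be an initial strong component of the attack graph of q with at least 2 atoms. Then for every atom F ∈ S there exists an atom H ∈ S with F →_M H; consequently, the M-graph of q contains a directed cycle all of whose atoms belong to S. -/
/-- Edge `F →_M G` of the M-graph: `F ≠ G`, both in `q`, and
`FD(c-atoms(q)) ⊨ vars(F) → key(G)`. -/
def MedgeA {A V : Type} (D : Type) (keyA varsA : A → Set V) (mode : A → Bool)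
    (q : Set A) (F G : A) : Prop :=
  F ∈ q ∧ G ∈ q ∧ F ≠ G ∧
    FDImplies D (FDsetA keyA varsA (catomsA mode q)) (varsA F) (keyA G)

/-- `F` attacks the variable `x`: there is a witness sequence from `F` to an atom
containing `x`, where `x` and every step variable lie outside `key⁺(F,q)`. -/
def attacksVar {A V : Type} (D : Type) (keyA varsA : A → Set V) (mode : A → Bool)
    (q : Set A) (F : A) (x : V) : Prop :=
  F ∈ q ∧ x ∉ keyCl D keyA varsA mode q F ∧
    ∃ G, Relation.ReflTransGen
        (attackStep varsA q (keyCl D keyA varsA mode q F)) F G ∧ x ∈ varsA G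

/-- `L` is a sequential proof for `FD(q) ⊨ Z → w`. -/
def IsSeqProof {A V : Type} (keyA varsA : A → Set V) (q : Set A)
    (Z : Set V) (w : V) (L : List A) : Prop :=
  (∀ F ∈ L, F ∈ q) ∧
  (∀ i (h : i < L.length),
      keyA (L.get ⟨i, h⟩) ⊆ Z ∪ {v | ∃ F ∈ L.take i, v ∈ varsA F}) ∧
  ∃ F ∈ L, w ∈ varsA F

/-- The functional dependency `Z → w` is internal to `q`: there is a sequential
proof for `FD(q) ⊨ Z → w` no atom of which attacks a variable of `Z ∪ {w}`, and
`Z ⊆ vars(F)` for some atom `F` of `q`. -/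
def Internal {A V : Type} (D : Type) (keyA varsA : A → Set V) (mode : A → Bool)
    (q : Set A) (Z : Set V) (w : V) : Prop :=
  (∃ L, IsSeqProof keyA varsA q Z w L ∧
      ∀ F ∈ L, ∀ u ∈ Z ∪ {w}, ¬ attacksVar D keyA varsA mode q F u) ∧
  ∃ F ∈ q, Z ⊆ varsA F

/-- `q` is saturated: every functional dependency internal to `q` is implied by
`FD(c-atoms(q))`. -/
def Saturated {A V : Type} (D : Type) (keyA varsA : A → Set V) (mode : A → Bool)
    (q : Set A) : Prop :=
  ∀ Z w, Internal D keyA varsA mode q Z w →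
    FDImplies D (FDsetA keyA varsA (catomsA mode q)) Z {w}

/-- The attack graph of `q` contains no strong cycle. -/
def NoStrongCycle {A V : Type} (D : Type) (keyA varsA : A → Set V) (mode : A → Bool)
    (q : Set A) : Prop :=
  ¬ ∃ (n : ℕ) (f : ℕ → A), 0 < n ∧ f n = f 0 ∧
      (∀ i < n, attacks D keyA varsA mode q (f i) (f (i + 1))) ∧
      ∃ i < n, ¬ FDImplies D (FDsetA keyA varsA q) (keyA (f i)) (keyA (f (i + 1)))

/-- `S` is an initial strong component of the attack graph of `q`:
it is the mutual-reachability class of some atom of `q` and no attack enters it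
from outside. -/
def IsInitialSCC {A V : Type} (D : Type) (keyA varsA : A → Set V) (mode : A → Bool)
    (q : Set A) (S : Set A) : Prop :=
  (∃ F₀, F₀ ∈ q ∧ S = {G | G ∈ q ∧
      Relation.ReflTransGen (attacks D keyA varsA mode q) F₀ G ∧
      Relation.ReflTransGen (attacks D keyA varsA mode q) G F₀}) ∧
  ∀ F G, attacks D keyA varsA mode q F G → G ∈ S → F ∈ S


/-!
Fix `F ∈ S` and let `W` be the closure of `vars(F)` under `FD(q \ S)`. Some atom `H ≠ F` of `S`
has `key(H) ⊆ W`: otherwise take the first attack `F` attacks `c` on a path from `F` to another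
atom of `S`; it is weak because `q` has no strong cycle, so `key(c)` lies in the closure of
`key(F)` under `FD(q)`, and that closure stays inside `W` because no atom of `S` other than `F`
can fire there. A sequential proof of `vars(F) → w`, `w ∈ key(H)`, by atoms outside `S` is
internal: an atom outside `S` attacking a variable of `F` or of `H` would attack into the initial
component `S`. Saturation then gives `F →_M H`, and following `M`-edges inside the finite set `S`
closes a cycle.
-/

section FunctionalDependencies

variable {V : Type} {Sg : Set (Set V × Set V)} {Z : Set V}

inductive FDClosure (Sg : Set (Set V × Set V)) (Z : Set V) : V → Prop
  | base {x : V} : x ∈ Z → FDClosure Sg Z x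
  | step {σ : Set V × Set V} {w : V} :
      σ ∈ Sg → (∀ u ∈ σ.1, FDClosure Sg Z u) → w ∈ σ.2 → FDClosure Sg Z w

theorem FDClosure.mem_of_closed {X : Set V} (hZ : Z ⊆ X) (hX : ∀ σ ∈ Sg, σ.1 ⊆ X → σ.2 ⊆ X)
    {w : V} (hw : FDClosure Sg Z w) : w ∈ X := by
  induction hw with
  | base hx => exact hZ hx
  | step hσ _ hw ih => exact hX _ hσ ih hw

theorem fdImplies_iff_fdClosure {D : Type} [Nontrivial D] {Y : Set V} :
    FDImplies D Sg Z Y ↔ ∀ y ∈ Y, FDClosure Sg Z y := by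
  classical
  constructor
  · intro h y hy
    -- countermodel: the constant valuation `a` and the valuation equal to `a` exactly on the closure
    obtain ⟨a, b, hab⟩ := exists_pair_ne D
    let μ : V → D := fun x => if FDClosure Sg Z x then a else b
    have hμ : ∀ x, μ x = a ↔ FDClosure Sg Z x := fun x => by
      by_cases hx : FDClosure Sg Z x <;> simp [μ, hx, hab.symm]
    have hstep : ∀ σ ∈ Sg, (∀ x ∈ σ.1, μ x = a) → ∀ y ∈ σ.2, μ y = a :=
      fun σ hσ h y hy => (hμ y).mpr (.step hσ (fun u hu => (hμ u).mp (h u hu)) hy)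
    have hsat : ∀ σ ∈ Sg, FDSat ({fun _ => a, μ} : Set (V → D)) σ.1 σ.2 := by
      intro σ hσ θ' hθ' μ' hμ' hag y hy
      rcases hθ' with rfl | rfl <;> rcases hμ' with rfl | rfl
      · rfl
      · exact (hstep σ hσ (fun x hx => (hag x hx).symm) y hy).symm
      · exact hstep σ hσ hag y hy
      · rfl
    exact (hμ y).mp <| h _ ((Set.finite_singleton μ).insert _) hsat μ (.inr rfl) _ (.inl rfl)
      (fun x hx => (hμ x).mpr (.base hx)) y hy
  · intro h Vs _ hsat θ hθ μ hμ hag y hy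
    exact (h y hy).mem_of_closed (X := {x | θ x = μ x}) hag
      fun σ hσ hσ₁ => hsat σ hσ θ hθ μ hμ hσ₁

end FunctionalDependencies

section SequentialProofs

variable {A V : Type} {keyA varsA : A → Set V} {s : Set A} {Z : Set V}

def varsOf (varsA : A → Set V) (L : List A) : Set V :=
  {v | ∃ F ∈ L, v ∈ varsA F}

def IsSeqChain (keyA varsA : A → Set V) (Z : Set V) (L : List A) : Prop :=
  ∀ i (h : i < L.length), keyA L[i] ⊆ Z ∪ varsOf varsA (L.take i)

theorem IsSeqChain.append_singleton {L : List A} (hL : IsSeqChain keyA varsA Z L) {E : A}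
    (hE : keyA E ⊆ Z ∪ varsOf varsA L) : IsSeqChain keyA varsA Z (L ++ [E]) := by
  intro i hi
  rw [List.length_append, List.length_singleton] at hi
  rcases (Nat.lt_succ_iff.mp hi).lt_or_eq with hi | rfl
  · simpa [List.getElem_append_left hi, List.take_append_of_le_length hi.le] using hL i hi
  · simpa using hE

theorem IsSeqChain.exists_covering_fdClosure (hs : s.Finite) {L : List A}
    (hL : IsSeqChain keyA varsA Z L) (hLs : ∀ E ∈ L, E ∈ s) :
    ∃ L', IsSeqChain keyA varsA Z L' ∧ (∀ E ∈ L', E ∈ s) ∧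
      ∀ w, FDClosure (FDsetA keyA varsA s) Z w → w ∈ Z ∪ varsOf varsA L' := by
  by_cases hext : ∃ E ∈ s, E ∉ L ∧ keyA E ⊆ Z ∪ varsOf varsA L
  · obtain ⟨E, hEs, hEL, hE⟩ := hext
    exact (hL.append_singleton hE).exists_covering_fdClosure hs
      (by simpa [or_imp, forall_and] using ⟨hLs, hEs⟩)
  · push Not at hext
    refine ⟨L, hL, hLs, fun w hw => hw.mem_of_closed Set.subset_union_left ?_⟩
    rintro _ ⟨E, hEs, rfl⟩ hE
    by_cases hEL : E ∈ L
    · exact fun x hx => Or.inr ⟨E, hEL, hx⟩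
    · exact absurd hE (hext E hEs hEL)
termination_by (s \ {E | E ∈ L}).ncard
decreasing_by
  refine Set.ncard_lt_ncard ((Set.ssubset_iff_of_subset ?_).mpr ⟨E, ⟨hEs, hEL⟩, ?_⟩) hs.sdiff
  · exact Set.sdiff_subset_sdiff_right fun x hx => List.mem_append_left _ hx
  · simp

theorem exists_isSeqProof_of_fdClosure (hs : s.Finite) {w : V}
    (hw : FDClosure (FDsetA keyA varsA s) Z w) (hwZ : w ∉ Z) :
    ∃ L, IsSeqProof keyA varsA s Z w L := by
  obtain ⟨L, hL, hLs, hcover⟩ :=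
    (show IsSeqChain keyA varsA Z [] by simp [IsSeqChain]).exists_covering_fdClosure hs (by simp)
  obtain ⟨F, hF, hwF⟩ := (hcover w hw).resolve_left hwZ
  exact ⟨L, hLs, hL, F, hF, hwF⟩

theorem IsSeqProof.mono {t : Set A} {w : V} {L : List A} (h : IsSeqProof keyA varsA s Z w L)
    (hst : s ⊆ t) : IsSeqProof keyA varsA t Z w L :=
  ⟨fun F hF => hst (h.1 F hF), h.2⟩

end SequentialProofs

theorem Relation.ReflTransGen.exists_seq {α : Type} {r : α → α → Prop} {a b : α}
    (h : Relation.ReflTransGen r a b) :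
    ∃ (n : ℕ) (f : ℕ → α), f 0 = a ∧ f n = b ∧ ∀ i < n, r (f i) (f (i + 1)) := by
  induction h using Relation.ReflTransGen.head_induction_on with
  | refl => exact ⟨0, fun _ => b, rfl, rfl, by simp⟩
  | @head a c hac _ ih =>
    obtain ⟨n, f, h0, hn, hf⟩ := ih
    refine ⟨n + 1, fun | 0 => a | i + 1 => f i, rfl, hn, ?_⟩
    rintro (_ | i) hi
    · simpa [h0] using hac
    · exact hf i (by omega)

theorem exists_cycle_of_forall_exists_rel {α : Type} {r : α → α → Prop} {S : Set α}
    (hS : S.Finite) (hne : S.Nonempty) (h : ∀ a ∈ S, ∃ b ∈ S, r a b) :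
    ∃ (m : ℕ) (f : ℕ → α), 0 < m ∧ f m = f 0 ∧ ∀ i < m, f i ∈ S ∧ r (f i) (f (i + 1)) := by
  choose! g hgS hr using h
  obtain ⟨a, ha⟩ := hne
  have hmem : ∀ n, g^[n] a ∈ S := fun n => Set.MapsTo.iterate (fun _ hx => hgS _ hx) n ha
  obtain ⟨i, j, hij, hfij⟩ := hS.exists_lt_map_eq_of_forall_mem hmem
  refine ⟨j - i, fun k => g^[i + k] a, by omega, by simpa [Nat.add_sub_cancel' hij.le] using
    hfij.symm, fun k _ => ⟨hmem _, ?_⟩⟩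
  dsimp only
  rw [← add_assoc, Function.iterate_succ_apply']
  exact hr _ (hmem _)

section AttackGraph

variable {A V D : Type} {keyA varsA : A → Set V} {mode : A → Bool} {q S : Set A} {E F G c : A}

theorem attacks_of_attacksVar {u : V} (h : attacksVar D keyA varsA mode q E u) (hG : G ∈ q)
    (hu : u ∈ varsA G) (hne : E ≠ G) : attacks D keyA varsA mode q E G := by
  obtain ⟨hE, hucl, G', hpath, huG'⟩ := h
  exact ⟨hE, hG, hne, hpath.tail ⟨hG, u, huG', hu, hucl⟩⟩

theorem NoStrongCycle.fdImplies_key_of_attacks (hnsc : NoStrongCycle D keyA varsA mode q)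
    (hFc : attacks D keyA varsA mode q F c)
    (hcF : Relation.ReflTransGen (attacks D keyA varsA mode q) c F) :
    FDImplies D (FDsetA keyA varsA q) (keyA F) (keyA c) := by
  by_contra hstrong
  obtain ⟨n, f, h0, hn, hf⟩ := hcF.exists_seq
  refine hnsc ⟨n + 1, fun | 0 => F | i + 1 => f i, n.succ_pos, hn, ?_, 0, n.succ_pos,
    by simpa [h0] using hstrong⟩
  rintro (_ | i) hi
  · simpa [h0] using hFc
  · exact hf i (by omega)

namespace IsInitialSCC

theorem subset (hS : IsInitialSCC D keyA varsA mode q S) : S ⊆ q := by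
  obtain ⟨⟨F₀, -, rfl⟩, -⟩ := hS
  exact fun G hG => hG.1

theorem reflTransGen (hS : IsInitialSCC D keyA varsA mode q S) (hF : F ∈ S) (hG : G ∈ S) :
    Relation.ReflTransGen (attacks D keyA varsA mode q) F G := by
  obtain ⟨⟨F₀, -, rfl⟩, -⟩ := hS
  exact hF.2.2.trans hG.2.1

theorem mem_of_reflTransGen (hS : IsInitialSCC D keyA varsA mode q S)
    (hF : F ∈ S) (hG : G ∈ S) (hc : c ∈ q)
    (hFc : Relation.ReflTransGen (attacks D keyA varsA mode q) F c)
    (hcG : Relation.ReflTransGen (attacks D keyA varsA mode q) c G) : c ∈ S := by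
  obtain ⟨⟨F₀, -, rfl⟩, -⟩ := hS
  exact ⟨hc, hF.2.1.trans hFc, hcG.trans hG.2.2⟩

theorem not_attacksVar (hS : IsInitialSCC D keyA varsA mode q S) (hE : E ∉ S) (hG : G ∈ S) {u : V} (hu : u ∈ varsA G) :
    ¬ attacksVar D keyA varsA mode q E u := fun h =>
  hE (hS.2 E G (attacks_of_attacksVar h (hS.subset hG) hu fun h => hE (h ▸ hG)) hG)

theorem exists_key_subset_fdClosure [Nontrivial D] (hS : IsInitialSCC D keyA varsA mode q S)
    (hkey : keyA F ⊆ varsA F)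
    (hnsc : NoStrongCycle D keyA varsA mode q) (hnt : S.Nontrivial) (hF : F ∈ S) :
    ∃ H ∈ S, H ≠ F ∧ keyA H ⊆ {x | FDClosure (FDsetA keyA varsA (q \ S)) (varsA F) x} := by
  set W := {x | FDClosure (FDsetA keyA varsA (q \ S)) (varsA F) x}
  obtain ⟨G, hG, hGF⟩ := hnt.exists_ne F
  obtain rfl | ⟨c, hFc, hcG⟩ := (hS.reflTransGen hF hG).cases_head
  · exact absurd rfl hGF
  have hcS : c ∈ S := hS.mem_of_reflTransGen hF hG hFc.2.1 (.single hFc) hcG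
  have hweak := hnsc.fdImplies_key_of_attacks hFc (hS.reflTransGen hcS hF)
  by_contra! hno
  -- inside `W`, the only atom of `S` whose key is available is `F` itself
  have hclosed : ∀ y, FDClosure (FDsetA keyA varsA q) (keyA F) y → y ∈ W := by
    refine fun y hy => hy.mem_of_closed (fun x hx => FDClosure.base (hkey hx)) ?_
    rintro _ ⟨E, hEq, rfl⟩ hEW
    by_cases hES : E ∈ S
    · obtain rfl | hEF := eq_or_ne E F
      · exact fun x hx => FDClosure.base hx
      · exact absurd hEW (hno E hES hEF)
    · exact fun x hx => FDClosure.step ⟨E, ⟨hEq, hES⟩, rfl⟩ hEW hx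
  exact hno c hcS hFc.2.2.1.symm fun y hy => hclosed y (fdImplies_iff_fdClosure.mp hweak y hy)

theorem internal (hS : IsInitialSCC D keyA varsA mode q S) (hq : q.Finite) {H : A} (hF : F ∈ S) (hH : H ∈ S) {w : V} (hwH : w ∈ varsA H)
    (hw : FDClosure (FDsetA keyA varsA (q \ S)) (varsA F) w) (hwF : w ∉ varsA F) :
    Internal D keyA varsA mode q (varsA F) w := by
  obtain ⟨L, hL⟩ := exists_isSeqProof_of_fdClosure hq.sdiff hw hwF
  refine ⟨⟨L, hL.mono Set.sdiff_subset, fun E hE u hu => ?_⟩, F, hS.subset hF, subset_rfl⟩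
  have hES : E ∉ S := (hL.1 E hE).2
  rcases hu with hu | rfl
  · exact hS.not_attacksVar hES hF hu
  · exact hS.not_attacksVar hES hH hwH

theorem medgeA [Nontrivial D] (hS : IsInitialSCC D keyA varsA mode q S)
    (hq : q.Finite) (hsat : Saturated D keyA varsA mode q) {H : A}
    (hkey : keyA H ⊆ varsA H) (hF : F ∈ S) (hH : H ∈ S) (hne : F ≠ H)
    (hHW : keyA H ⊆ {x | FDClosure (FDsetA keyA varsA (q \ S)) (varsA F) x}) :
    MedgeA D keyA varsA mode q F H := by
  refine ⟨hS.subset hF, hS.subset hH, hne, fdImplies_iff_fdClosure.mpr fun w hw => ?_⟩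
  by_cases hwF : w ∈ varsA F
  · exact .base hwF
  · exact fdImplies_iff_fdClosure.mp
      (hsat _ _ (hS.internal hq hF hH (hkey hw) (hHW hw) hwF)) w rfl

end IsInitialSCC

end AttackGraph

/-- If `q` is saturated and its attack graph has no strong cycle, then for every
initial strong component `S` of the attack graph with at least two atoms:
every `F ∈ S` has an M-graph successor `H ∈ S`, and consequently the M-graph of
`q` contains a directed cycle all of whose atoms belong to `S`. -/
theorem saturated_initial_scc_mcycle {A V D : Type} [Infinite D]
    (keyA varsA : A → Set V) (mode : A → Bool)
    (q : Set A) (hq : q.Finite) (hkey : ∀ F, keyA F ⊆ varsA F)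
    (hsat : Saturated D keyA varsA mode q)
    (hnsc : NoStrongCycle D keyA varsA mode q)
    (S : Set A) (hS : IsInitialSCC D keyA varsA mode q S)
    (hnt : S.Nontrivial) :
    (∀ F ∈ S, ∃ H ∈ S, MedgeA D keyA varsA mode q F H) ∧
      ∃ (m : ℕ) (f : ℕ → A), 0 < m ∧ f m = f 0 ∧
        ∀ i < m, f i ∈ S ∧ MedgeA D keyA varsA mode q (f i) (f (i + 1)) := by
  have hedge : ∀ F ∈ S, ∃ H ∈ S, MedgeA D keyA varsA mode q F H := fun F hF => by
    obtain ⟨H, hH, hHF, hHW⟩ := hS.exists_key_subset_fdClosure (hkey F) hnsc hnt hF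
    exact ⟨H, hH, hS.medgeA hq hsat (hkey H) hF hH hHF.symm hHW⟩
  exact ⟨hedge, exists_cycle_of_forall_exists_rel (hq.subset hS.subset) hnt.nonempty hedge⟩
end
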